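/- arXiv:2604.27651 — 2 statements merged into one kernel-verified Lean document; each statement's English description precedes it below -/
import Mathlib

section
/- Assume H is connected and ∑_{v∈V} s_v = 0. Then there exists f∈ℝ^{A↑} with 0 ≤ f_a ≤ ‖s‖₁ for every arc a∈A↑ and A↑f = b↑, where ‖s‖₁ = ∑_{v∈V} |s_v|. -/
open Finset

section

variable {V : Type*} [Fintype V] [DecidableEq V] [Nonempty V]
variable {E : Type*} [Fintype E]

/-- The ℓ¹ norm on ℝ^V. -/
def l1norm (x : V → ℝ) : ℝ := ∑ v, |x v|

/-- Connectivity of the hypergraph. -/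
def HConn (edge : E → Finset V) : Prop :=
  ∀ u v : V, ∃ (k : ℕ) (p : Fin (k + 1) → V) (c : Fin k → E),
    p 0 = u ∧ p (Fin.last k) = v ∧
    ∀ i : Fin k, p i.castSucc ∈ edge (c i) ∧ p i.succ ∈ edge (c i)

/-- Net flow (incoming minus outgoing) of a lifted flow at an original vertex `v`. -/
noncomputable def incV (edge : E → Finset V) (fp fn : E → V → ℝ) (v : V) : ℝ :=
  (∑ e ∈ univ.filter (fun e => v ∈ edge e), fp e v)
    - ∑ e ∈ univ.filter (fun e => v ∈ edge e), fn e v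

/-- Net flow at the node `e⁺`. -/
noncomputable def incP (edge : E → Finset V) (fp : E → V → ℝ) (fq : E → ℝ) (e : E) : ℝ :=
  fq e - ∑ v ∈ edge e, fp e v

/-- Net flow at the node `e⁻`. -/
noncomputable def incM (edge : E → Finset V) (fn : E → V → ℝ) (fq : E → ℝ) (e : E) : ℝ :=
  (∑ v ∈ edge e, fn e v) - fq e

end

/-! Pick a root `r`. For every vertex `t`, send `|s t|` units along a simple path between `r` and
`t` in the bipartite incidence graph of the hypergraph, directed according to the sign of `s t`.
A simple path enters every node at most once, so the sum of these path flows has inflow at most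
`‖s‖₁` at every node, and since `∑ s = 0` the root's contributions cancel. A flow on the
incidence graph becomes a flow on the lifted graph by routing whatever enters a hyperedge node `e`
through the quadratic arc `e⁻ → e⁺`. -/

namespace SimpleGraph

variable {α : Type*}

structure IsFlow [Fintype α] (G : SimpleGraph α) (g : α → α → ℝ) (c : ℝ) (d : α → ℝ) : Prop where
  eq_zero_of_not_adj : ∀ a b, ¬ G.Adj a b → g a b = 0
  nonneg : ∀ a b, 0 ≤ g a b
  inflow_le : ∀ b, ∑ a, g a b ≤ c
  net_eq : ∀ b, ∑ a, g a b - ∑ a, g b a = d b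

namespace IsFlow

variable [Fintype α] {G : SimpleGraph α} {g : α → α → ℝ} {c : ℝ} {d : α → ℝ}

theorem zero : G.IsFlow 0 0 0 :=
  ⟨fun _ _ _ => rfl, fun _ _ => le_rfl, fun _ => by simp, fun _ => by simp⟩

theorem smul (h : G.IsFlow g c d) {k : ℝ} (hk : 0 ≤ k) : G.IsFlow (k • g) (k * c) (k • d) where
  eq_zero_of_not_adj a b hab := by simp [h.eq_zero_of_not_adj a b hab]
  nonneg a b := mul_nonneg hk (h.nonneg a b)
  inflow_le b := by simpa [← mul_sum] using mul_le_mul_of_nonneg_left (h.inflow_le b) hk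
  net_eq b := by simp [← mul_sum, ← mul_sub, h.net_eq b]

theorem sum {ι : Type*} (s : Finset ι) {g : ι → α → α → ℝ} {c : ι → ℝ} {d : ι → α → ℝ}
    (h : ∀ i ∈ s, G.IsFlow (g i) (c i) (d i)) :
    G.IsFlow (∑ i ∈ s, g i) (∑ i ∈ s, c i) (∑ i ∈ s, d i) where
  eq_zero_of_not_adj a b hab := by
    simp [Finset.sum_apply, sum_eq_zero fun i hi => (h i hi).eq_zero_of_not_adj a b hab]
  nonneg a b := by
    simpa [Finset.sum_apply] using sum_nonneg fun i hi => (h i hi).nonneg a b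
  inflow_le b := by
    simp only [Finset.sum_apply]
    rw [Finset.sum_comm]
    exact sum_le_sum fun i hi => (h i hi).inflow_le b
  net_eq b := by
    simp only [Finset.sum_apply]
    rw [Finset.sum_comm, Finset.sum_comm (s := univ), ← sum_sub_distrib]
    exact sum_congr rfl fun i hi => (h i hi).net_eq b

theorem le (h : G.IsFlow g c d) (a b : α) : g a b ≤ c :=
  (single_le_sum (fun a _ => h.nonneg a b) (mem_univ a)).trans (h.inflow_le b)

end IsFlow

theorem sum_countP_toProd_eq_countP_snd [Fintype α] [DecidableEq α] {G : SimpleGraph α}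
    (L : List G.Dart) (b : α) :
    ∑ a, L.countP (fun d => d.toProd = (a, b)) = L.countP (fun d => d.snd = b) := by
  induction L with
  | nil => simp
  | cons d L ih =>
    obtain ⟨⟨x, y⟩, _⟩ := d
    by_cases hy : y = b <;> simp [List.countP_cons, sum_add_distrib, ih, hy, eq_comm (a := x)]

theorem sum_countP_toProd_eq_countP_fst [Fintype α] [DecidableEq α] {G : SimpleGraph α}
    (L : List G.Dart) (a : α) :
    ∑ b, L.countP (fun d => d.toProd = (a, b)) = L.countP (fun d => d.fst = a) := by
  induction L with
  | nil => simp
  | cons d L ih =>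
    obtain ⟨⟨x, y⟩, _⟩ := d
    by_cases hx : x = a <;> simp [List.countP_cons, sum_add_distrib, ih, hx, eq_comm (a := y)]

namespace Walk

variable [DecidableEq α] {G : SimpleGraph α} {u v : α}

def dartFlow (p : G.Walk u v) (a b : α) : ℕ := p.darts.countP (fun d => d.toProd = (a, b))

theorem countP_snd_add_ite (p : G.Walk u v) (x : α) :
    p.darts.countP (fun d => d.snd = x) + (if x = u then 1 else 0)
      = p.darts.countP (fun d => d.fst = x) + (if x = v then 1 else 0) := by
  induction p with
  | nil => simp
  | cons h q ih =>
    simp only [darts_cons, List.countP_cons, decide_eq_true_eq]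
    grind

theorem IsPath.countP_snd_le_one {p : G.Walk u v} (hp : p.IsPath) (x : α) :
    p.darts.countP (fun d => d.snd = x) ≤ 1 := by
  have := List.nodup_iff_count_le_one.mp (hp.support_nodup.sublist p.support.tail_sublist) x
  simpa [← map_snd_darts, List.count_eq_countP, Function.comp_def, Bool.beq_eq_decide_eq] using this

theorem IsPath.isFlow [Fintype α] {p : G.Walk u v} (hp : p.IsPath) :
    G.IsFlow (fun a b => p.dartFlow a b) 1 (Pi.single v 1 - Pi.single u 1) where
  eq_zero_of_not_adj a b hab := by
    simp only [dartFlow, Nat.cast_eq_zero, List.countP_eq_zero, decide_eq_true_eq]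
    rintro ⟨⟨x, y⟩, hxy⟩ - hd
    obtain ⟨rfl, rfl⟩ := Prod.mk.inj hd
    exact hab hxy
  nonneg a b := Nat.cast_nonneg _
  inflow_le b := by
    simp only [dartFlow]
    exact_mod_cast (sum_countP_toProd_eq_countP_snd p.darts b).trans_le (hp.countP_snd_le_one b)
  net_eq b := by
    have : (p.darts.countP (fun d => d.snd = b) : ℝ) + (if b = u then 1 else 0)
        = p.darts.countP (fun d => d.fst = b) + (if b = v then 1 else 0) := by
      exact_mod_cast countP_snd_add_ite p b
    simp only [dartFlow]
    rw [← Nat.cast_sum, ← Nat.cast_sum, sum_countP_toProd_eq_countP_snd,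
      sum_countP_toProd_eq_countP_fst]
    simp only [Pi.sub_apply, Pi.single_apply]
    split_ifs at this ⊢ <;> linarith

end Walk

theorem Reachable.exists_isFlow [Fintype α] [DecidableEq α] {G : SimpleGraph α} {u v : α}
    (h : G.Reachable u v) : ∃ g, G.IsFlow g 1 (Pi.single v 1 - Pi.single u 1) :=
  let ⟨_, hp⟩ := h.exists_isPath
  ⟨_, hp.isFlow⟩

theorem exists_isFlow_of_sum_eq_zero [Fintype α] [DecidableEq α] (G : SimpleGraph α)
    {d : α → ℝ} (hd : ∑ t, d t = 0) {r : α} (hr : ∀ t, d t ≠ 0 → G.Reachable r t) :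
    ∃ g, G.IsFlow g (∑ t, |d t|) d := by
  have hpair : ∀ t, ∃ g, G.IsFlow g |d t| (d t • (Pi.single t 1 - Pi.single r 1)) := by
    intro t
    rcases lt_trichotomy (d t) 0 with hneg | hzero | hpos
    · obtain ⟨g, hg⟩ := (hr t hneg.ne).symm.exists_isFlow
      refine ⟨|d t| • g, ?_⟩
      convert hg.smul (abs_nonneg (d t)) using 1
      · simp
      · rw [abs_of_neg hneg, neg_smul, ← smul_neg, neg_sub]
    · exact ⟨0, by simpa [hzero] using IsFlow.zero⟩
    · obtain ⟨g, hg⟩ := (hr t hpos.ne').exists_isFlow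
      refine ⟨|d t| • g, ?_⟩
      convert hg.smul (abs_nonneg (d t)) using 1
      · simp
      · rw [abs_of_pos hpos]
  choose g hg using hpair
  refine ⟨∑ t, g t, ?_⟩
  convert IsFlow.sum univ fun t _ => hg t
  ext y
  simp [Finset.sum_apply, Pi.single_apply, mul_sub, sum_sub_distrib, hd]

end SimpleGraph

section Hypergraph

variable {V E : Type*} (edge : E → Finset V)

def incidenceGraph : SimpleGraph (V ⊕ E) where
  Adj
    | .inl x, .inr e => x ∈ edge e
    | .inr e, .inl x => x ∈ edge e
    | _, _ => False
  symm := ⟨by rintro (x | e) (y | f) h <;> exact h⟩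
  loopless := ⟨by rintro (x | e) h <;> exact h⟩

variable {edge}

theorem reachable_inl_of_hConn (hconn : HConn edge) (u v : V) :
    (incidenceGraph edge).Reachable (.inl u) (.inl v) := by
  obtain ⟨k, p, c, rfl, rfl, hpc⟩ := hconn u v
  refine Fin.induction
    (motive := fun i => (incidenceGraph edge).Reachable (.inl (p 0)) (.inl (p i)))
    .rfl (fun i ih => ?_) (Fin.last k)
  have h₁ : (incidenceGraph edge).Adj (.inl (p i.castSucc)) (.inr (c i)) := (hpc i).1
  have h₂ : (incidenceGraph edge).Adj (.inr (c i)) (.inl (p i.succ)) := (hpc i).2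
  exact ih.trans (h₁.reachable.trans h₂.reachable)

variable [Fintype V] [Fintype E]

theorem sum_eq_sum_filter_of_adj_inl [DecidableEq V] {v : V} {h : V ⊕ E → ℝ}
    (hh : ∀ a, ¬ (incidenceGraph edge).Adj a (.inl v) → h a = 0) :
    ∑ a, h a = ∑ e with v ∈ edge e, h (.inr e) := by
  rw [Fintype.sum_sum_type, sum_eq_zero fun x _ => hh (.inl x) id, zero_add]
  exact (sum_filter_of_ne (p := fun e => v ∈ edge e)
    fun e _ he => not_not.mp (mt (hh (.inr e)) he)).symm

theorem sum_eq_sum_mem_of_adj_inr {e : E} {h : V ⊕ E → ℝ}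
    (hh : ∀ a, ¬ (incidenceGraph edge).Adj a (.inr e) → h a = 0) :
    ∑ a, h a = ∑ x ∈ edge e, h (.inl x) := by
  rw [Fintype.sum_sum_type, sum_eq_zero (s := univ) (f := fun f => h (.inr f))
    fun f _ => hh (.inr f) id, add_zero]
  exact (sum_subset (subset_univ _) fun x _ hx => hh (.inl x) hx).symm

variable {g : V ⊕ E → V ⊕ E → ℝ} {c : ℝ} {d : V ⊕ E → ℝ}

theorem incV_of_isFlow [DecidableEq V] (hg : (incidenceGraph edge).IsFlow g c d) (v : V) :
    incV edge (fun e x => g (.inr e) (.inl x)) (fun e x => g (.inl x) (.inr e)) v = d (.inl v) := by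
  rw [incV, ← hg.net_eq, sum_eq_sum_filter_of_adj_inl fun a ha => hg.eq_zero_of_not_adj _ _ ha,
    sum_eq_sum_filter_of_adj_inl fun a ha => hg.eq_zero_of_not_adj _ _ fun h => ha h.symm]

theorem incP_of_isFlow (hg : (incidenceGraph edge).IsFlow g c d) (e : E) :
    incP edge (fun e x => g (.inr e) (.inl x)) (fun e => ∑ a, g a (.inr e)) e = d (.inr e) := by
  rw [incP, ← hg.net_eq, sum_eq_sum_mem_of_adj_inr (h := g (.inr e))
    fun a ha => hg.eq_zero_of_not_adj _ _ fun h => ha h.symm]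

theorem incM_of_isFlow (hg : (incidenceGraph edge).IsFlow g c d) (e : E) :
    incM edge (fun e x => g (.inl x) (.inr e)) (fun e => ∑ a, g a (.inr e)) e = 0 := by
  rw [incM, sum_eq_sum_mem_of_adj_inr (h := fun a => g a (.inr e))
    fun a ha => hg.eq_zero_of_not_adj _ _ ha, sub_self]

end Hypergraph

section

variable {V : Type*} [Fintype V] [DecidableEq V] [Nonempty V]
variable {E : Type*} [Fintype E]

theorem stmt7_general (edge : E → Finset V) (s : V → ℝ)
    (hconn : HConn edge) (hs : ∑ v, s v = 0) :
    ∃ (fp fn : E → V → ℝ) (fq : E → ℝ),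
      (∀ e, ∀ v ∈ edge e, 0 ≤ fp e v ∧ fp e v ≤ l1norm s) ∧
      (∀ e, ∀ v ∈ edge e, 0 ≤ fn e v ∧ fn e v ≤ l1norm s) ∧
      (∀ e, 0 ≤ fq e ∧ fq e ≤ l1norm s) ∧
      (∀ v, incV edge fp fn v = s v) ∧
      (∀ e, incP edge fp fq e = 0) ∧
      (∀ e, incM edge fn fq e = 0) := by
  classical
  obtain ⟨r⟩ := ‹Nonempty V›
  obtain ⟨g, hg⟩ := (incidenceGraph edge).exists_isFlow_of_sum_eq_zero
    (d := Sum.elim s (0 : E → ℝ)) (by simp [Fintype.sum_sum_type, hs]) (r := .inl r)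
    (by rintro (t | e) ht; exacts [reachable_inl_of_hConn hconn r t, absurd rfl ht])
  have hnorm : ∑ t, |Sum.elim s (0 : E → ℝ) t| = l1norm s := by
    simp [Fintype.sum_sum_type, l1norm]
  rw [hnorm] at hg
  exact ⟨fun e x => g (.inr e) (.inl x), fun e x => g (.inl x) (.inr e),
    fun e => ∑ a, g a (.inr e),
    fun e x _ => ⟨hg.nonneg _ _, hg.le _ _⟩, fun e x _ => ⟨hg.nonneg _ _, hg.le _ _⟩,
    fun e => ⟨sum_nonneg fun a _ => hg.nonneg _ _, hg.inflow_le _⟩,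
    incV_of_isFlow hg, incP_of_isFlow hg, incM_of_isFlow hg⟩

theorem stmt7 (edge : E → Finset V) (hne : ∀ e, (edge e).Nonempty)
    (w : E → ℝ) (hw : ∀ e, 0 < w e) (s : V → ℝ)
    (hconn : HConn edge) (hs : ∑ v, s v = 0) :
    ∃ (fp fn : E → V → ℝ) (fq : E → ℝ),
      (∀ e, ∀ v ∈ edge e, 0 ≤ fp e v ∧ fp e v ≤ l1norm s) ∧
      (∀ e, ∀ v ∈ edge e, 0 ≤ fn e v ∧ fn e v ≤ l1norm s) ∧
      (∀ e, 0 ≤ fq e ∧ fq e ≤ l1norm s) ∧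
      (∀ v, incV edge fp fn v = s v) ∧
      (∀ e, incP edge fp fq e = 0) ∧
      (∀ e, incM edge fn fq e = 0) :=
  stmt7_general edge s hconn hs

end
end

section
/- Assume d_v > 0 for every v∈V and λ > 0. Let g∉V be a new vertex, V̄ = V∪{g}, Ē = E ∪ {{v,g} : v∈V}, with weights w̄_e = w_e for e∈E and w̄_{{v,g}} = λ d_v for v∈V, and let s̄∈ℝ^{V̄} be defined by s̄_v = s_v for v∈V and s̄_g = −∑_{v∈V} s_v. Let 𝓟_{H̄}(x̄) = (1/2)∑_{ē∈Ē} w̄_ē R_ē(x̄)² − ⟨s̄, x̄⟩ for x̄∈ℝ^{V̄}. Then for every x∈ℝ^V, 𝓟_{H̄}(x,0) = 𝓟_λ(x), where (x,0) denotes the extension of x to V̄ taking value 0 at g; consequently inf_{x∈ℝ^V} 𝓟_λ(x) = inf{𝓟_{H̄}(x̄) : x̄∈ℝ^{V̄}, x̄_g = 0}. -/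
open Finset

section

variable {V : Type*} [Fintype V] [DecidableEq V] [Nonempty V]
variable {E : Type*} [Fintype E]

/-- The edge range `R_e(x) = max_{u∈e} x_u - min_{v∈e} x_v`. -/
noncomputable def eRange {V' E' : Type*} [Fintype V'] (edge : E' → Finset V')
    (hne : ∀ e, (edge e).Nonempty) (x : V' → ℝ) (e : E') : ℝ :=
  (edge e).sup' (hne e) x - (edge e).inf' (hne e) x

/-- Weighted degree `d_v = ∑_{e ∋ v} w_e`. -/
noncomputable def degw (edge : E → Finset V) (w : E → ℝ) (v : V) : ℝ :=
  ∑ e ∈ univ.filter (fun e => v ∈ edge e), w e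

/-- The regularized objective `𝓟_λ`. -/
noncomputable def Plam (edge : E → Finset V) (hne : ∀ e, (edge e).Nonempty)
    (w : E → ℝ) (s : V → ℝ) (lam : ℝ) (x : V → ℝ) : ℝ :=
  (1 / 2) * ∑ e, w e * (eRange edge hne x e) ^ 2
    + lam / 2 * ∑ v, degw edge w v * (x v) ^ 2
    - ∑ v, s v * x v

/-- Edges of the augmented hypergraph on `V̄ = V ∪ {g}` (with `g = none`):
the original hyperedges together with one ground edge `{v, g}` per vertex. -/
def barEdge (edge : E → Finset V) : E ⊕ V → Finset (Option V)
  | Sum.inl e => (edge e).image some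
  | Sum.inr v => {some v, none}

theorem barEdge_nonempty (edge : E → Finset V) (hne : ∀ e, (edge e).Nonempty) :
    ∀ eb : E ⊕ V, (barEdge edge eb).Nonempty := by
  intro eb
  cases eb with
  | inl e => exact (hne e).image _
  | inr v => exact Finset.insert_nonempty _ _

theorem stmt17 (edge : E → Finset V) (hne : ∀ e, (edge e).Nonempty)
    (w : E → ℝ) (hw : ∀ e, 0 < w e) (s : V → ℝ)
    (lam : ℝ) (hlam : 0 < lam)
    (hd : ∀ v, 0 < degw edge w v) :
    let barW : E ⊕ V → ℝ := Sum.elim w (fun v => lam * degw edge w v)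
    let barS : Option V → ℝ := fun o => Option.elim o (-(∑ v, s v)) s
    let Pbar : (Option V → ℝ) → ℝ := fun xb =>
      (1 / 2) * ∑ eb, barW eb * (eRange (barEdge edge) (barEdge_nonempty edge hne) xb eb) ^ 2
        - ∑ u, barS u * xb u
    (∀ x : V → ℝ, Pbar (fun o => Option.elim o 0 x) = Plam edge hne w s lam x) ∧
    sInf {c : ℝ | ∃ x : V → ℝ, c = Plam edge hne w s lam x}
      = sInf {c : ℝ | ∃ xb : Option V → ℝ, xb none = 0 ∧ c = Pbar xb} := by
  intro barW barS Pbar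
  have key : ∀ x : V → ℝ, Pbar (fun o => Option.elim o 0 x) = Plam edge hne w s lam x := by
    intro x
    set xb : Option V → ℝ := fun o => Option.elim o 0 x with hxb
    have hA : ∑ e : E, barW (Sum.inl e) *
        (eRange (barEdge edge) (barEdge_nonempty edge hne) xb (Sum.inl e)) ^ 2
        = ∑ e : E, w e * (eRange edge hne x e) ^ 2 := by
      refine Finset.sum_congr rfl fun e _ => ?_
      have : eRange (barEdge edge) (barEdge_nonempty edge hne) xb (Sum.inl e)
          = eRange edge hne x e := by
        simp only [eRange, barEdge, sup'_image, inf'_image]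
        rfl
      rw [this]; rfl
    have hB : ∑ v : V, barW (Sum.inr v) *
        (eRange (barEdge edge) (barEdge_nonempty edge hne) xb (Sum.inr v)) ^ 2
        = ∑ v : V, lam * (degw edge w v * (x v) ^ 2) := by
      refine Finset.sum_congr rfl fun v _ => ?_
      have h2 : (eRange (barEdge edge) (barEdge_nonempty edge hne) xb (Sum.inr v)) ^ 2
          = (x v) ^ 2 := by
        have hval : eRange (barEdge edge) (barEdge_nonempty edge hne) xb (Sum.inr v)
            = max (x v) 0 - min (x v) 0 := by
          simp only [eRange, barEdge]
          have hs : ({some v, none} : Finset (Option V)).sup'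
              (barEdge_nonempty edge hne (Sum.inr v)) xb = max (x v) 0 := by
            apply le_antisymm
            · apply Finset.sup'_le
              intro o ho
              rcases Finset.mem_insert.1 ho with h | h
              · subst h; exact le_max_left _ _
              · rw [Finset.mem_singleton.1 h]; exact le_max_right _ _
            · apply max_le
              · exact Finset.le_sup' (b := some v) xb (Finset.mem_insert_self _ _)
              · exact Finset.le_sup' (b := none) xb (Finset.mem_insert_of_mem (Finset.mem_singleton_self _))
          have hi : ({some v, none} : Finset (Option V)).inf'
              (barEdge_nonempty edge hne (Sum.inr v)) xb = min (x v) 0 := by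
            apply le_antisymm
            · apply le_min
              · exact Finset.inf'_le (b := some v) xb (Finset.mem_insert_self _ _)
              · exact Finset.inf'_le (b := none) xb (Finset.mem_insert_of_mem (Finset.mem_singleton_self _))
            · apply Finset.le_inf'
              intro o ho
              rcases Finset.mem_insert.1 ho with h | h
              · subst h; exact min_le_left _ _
              · rw [Finset.mem_singleton.1 h]; exact min_le_right _ _
          rw [hs, hi]
        rw [hval]
        rcases le_total (x v) 0 with h | h
        · rw [max_eq_right h, min_eq_left h]; ring
        · rw [max_eq_left h, min_eq_right h]; ring
      simp only [h2, barW, Sum.elim_inr, mul_assoc]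
    have hS : ∑ u : Option V, barS u * xb u = ∑ v : V, s v * x v := by
      rw [Fintype.sum_option]
      have : barS none * xb none = 0 := by simp [hxb]
      rw [this, zero_add]
      rfl
    show (1 / 2) * ∑ eb, barW eb *
        (eRange (barEdge edge) (barEdge_nonempty edge hne) xb eb) ^ 2
        - ∑ u, barS u * xb u = Plam edge hne w s lam x
    rw [Fintype.sum_sum_type, hA, hB, hS, Plam, ← Finset.mul_sum]
    ring
  refine ⟨key, ?_⟩
  congr 1
  ext c
  constructor
  · rintro ⟨x, rfl⟩
    exact ⟨fun o => Option.elim o 0 x, rfl, (key x).symm⟩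
  · rintro ⟨xb, h0, rfl⟩
    refine ⟨fun v => xb (some v), ?_⟩
    have hx : xb = fun o => Option.elim o 0 (fun v => xb (some v)) := by
      funext o; cases o with
      | none => exact h0
      | some v => rfl
    conv_lhs => rw [hx]
    exact key _

end
end
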